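/- arXiv:1901.01761 — 6 statements merged into one kernel-verified Lean document; each statement's English description precedes it below -/
import Mathlib

section
/- Let X be a finite type, p : X → ℝ → ℝ a parametric family of probability mass functions on X, and f : X → ℝ. Then for every θ, the map θ ↦ ∑_{x ∈ X} p x θ · f x is differentiable and its derivative at θ equals ∑_{x ∈ X} p x θ · (deriv of t ↦ log (p x t) at θ) · f x (the likelihood ratio / REINFORCE estimator identity). -/
open Real

theorem mul_deriv_log_comp_eq_deriv {f : ℝ → ℝ} {x : ℝ} (hf : DifferentiableAt ℝ f x) (hx : f x ≠ 0) :
    f x * deriv (fun t => log (f t)) x = deriv f x := by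
  rw [deriv.log hf hx, mul_div_cancel₀ _ hx]

theorem likelihood_ratio_estimator_general {X : Type*} [Fintype X]
    (p : X → ℝ → ℝ)
    (hpos : ∀ x θ, 0 < p x θ)
    (hdiff : ∀ x, Differentiable ℝ (p x))
    (f : X → ℝ) :
    ∀ θ : ℝ, HasDerivAt (fun θ => ∑ x, p x θ * f x)
      (∑ x, p x θ * deriv (fun t => Real.log (p x t)) θ * f x) θ := by
  intro θ
  have score : ∀ x, p x θ * deriv (fun t => log (p x t)) θ = deriv (p x) θ :=
    fun x => mul_deriv_log_comp_eq_deriv (hdiff x θ) (hpos x θ).ne'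
  simp only [score]
  exact HasDerivAt.fun_sum fun x _ => (hdiff x θ).hasDerivAt.mul_const (f x)

/-- The likelihood ratio / REINFORCE estimator identity: for a parametric family of
probability mass functions `p` on a finite type `X` and a loss `f : X → ℝ`, the map
`θ ↦ ∑ x, p x θ * f x` is differentiable with derivative
`∑ x, p x θ * (score of x at θ) * f x`. -/
theorem likelihood_ratio_estimator {X : Type*} [Fintype X]
    (p : X → ℝ → ℝ)
    (hpos : ∀ x θ, 0 < p x θ)
    (hdiff : ∀ x, Differentiable ℝ (p x))
    (hsum : ∀ θ : ℝ, ∑ x, p x θ = 1)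
    (f : X → ℝ) :
    ∀ θ : ℝ, HasDerivAt (fun θ => ∑ x, p x θ * f x)
      (∑ x, p x θ * deriv (fun t => Real.log (p x t)) θ * f x) θ :=
  likelihood_ratio_estimator_general p hpos hdiff f
end

section
/- Let X be a finite type, p : X → ℝ → ℝ a parametric family of probability mass functions on X, and f : X → ℝ → ℝ with θ ↦ f x θ differentiable for each x. Then for every θ, the derivative at θ of θ ↦ ∑_{x ∈ X} p x θ · f x θ equals ∑_{x ∈ X} p x θ · ( (deriv of t ↦ log (p x t) at θ) · f x θ + (deriv of t ↦ f x t at θ) ), i.e., the score-function estimator remains valid when the loss itself depends on the parameter. -/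
open Real

theorem mul_deriv_log_eq_deriv {p : ℝ → ℝ} {θ : ℝ} (hp : DifferentiableAt ℝ p θ)
    (hne : p θ ≠ 0) : p θ * deriv (fun t => log (p t)) θ = deriv p θ := by
  rw [deriv.log hp hne, mul_div_cancel₀ _ hne]

theorem score_function_estimator_param_dependent_loss_general {X : Type*} [Fintype X]
    (p : X → ℝ → ℝ)
    (hpos : ∀ x θ, 0 < p x θ)
    (hdiff : ∀ x, Differentiable ℝ (p x))
    (f : X → ℝ → ℝ)
    (hf : ∀ x, Differentiable ℝ (f x)) :
    ∀ θ : ℝ, deriv (fun θ => ∑ x, p x θ * f x θ) θ =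
      ∑ x, p x θ * (deriv (fun t => Real.log (p x t)) θ * f x θ
        + deriv (fun t => f x t) θ) := by
  intro θ
  rw [deriv_fun_sum (A := fun x t => p x t * f x t) fun x _ => (hdiff x θ).mul (hf x θ)]
  refine Finset.sum_congr rfl fun x _ => ?_
  rw [deriv_fun_mul (hdiff x θ) (hf x θ), mul_add, ← mul_assoc,
    mul_deriv_log_eq_deriv (hdiff x θ) (hpos x θ).ne']

/-- The score-function estimator remains valid when the loss depends on the parameter:
the derivative at `θ` of `θ ↦ ∑ x, p x θ * f x θ` equals
`∑ x, p x θ * (score x θ * f x θ + deriv (f x) θ)`. -/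
theorem score_function_estimator_param_dependent_loss {X : Type*} [Fintype X]
    (p : X → ℝ → ℝ)
    (hpos : ∀ x θ, 0 < p x θ)
    (hdiff : ∀ x, Differentiable ℝ (p x))
    (hsum : ∀ θ : ℝ, ∑ x, p x θ = 1)
    (f : X → ℝ → ℝ)
    (hf : ∀ x, Differentiable ℝ (f x)) :
    ∀ θ : ℝ, deriv (fun θ => ∑ x, p x θ * f x θ) θ =
      ∑ x, p x θ * (deriv (fun t => Real.log (p x t)) θ * f x θ
        + deriv (fun t => f x t) θ) :=
  score_function_estimator_param_dependent_loss_general p hpos hdiff f hf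
end

section
/- Let A and S be finite types. Let π : A → ℝ → ℝ be a parametric family of probability mass functions on A, P : S → A → ℝ a transition kernel (P s a ≥ 0 and ∑_{s} P s a = 1 for each a), and ℓ₁ : A → ℝ, ℓ₂ : S → ℝ cost functions. Define the expected cost J(θ) = ∑_{a} π a θ · (ℓ₁ a + ∑_{s} P s a · ℓ₂ s) and the critic Q(a) = ℓ₁ a + ∑_{s} P s a · ℓ₂ s. Then for every θ and every baseline constant b ∈ ℝ, J is differentiable at θ and deriv J θ = ∑_{a} π a θ · (deriv of t ↦ log (π a t) at θ) · (Q a − b). -/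
/-!
Since `π a θ * (log ∘ π a)' θ = (π a)' θ`, the score-weighted sum `∑ a, π a θ * (log ∘ π a)' θ * Q a`
is just `∑ a, (π a)' θ * Q a`, the derivative of `J`. A baseline `b` only adds
`b * ∑ a, (π a)' θ`, the derivative of the constant `∑ a, π a θ = 1`, which vanishes.
-/

open Finset

section ScoreFunction

variable {ι : Type*} [Fintype ι] {p : ι → ℝ → ℝ} {x : ℝ}

theorem sum_deriv_eq_zero_of_sum_eq_const {c : ℝ} (hp : ∀ i, DifferentiableAt ℝ (p i) x)
    (hsum : ∀ t, ∑ i, p i t = c) :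
    ∑ i, deriv (p i) x = 0 := by
  rw [← deriv_fun_sum fun i _ => hp i, funext hsum, deriv_const]

theorem mul_deriv_log_eq_deriv_s7 {f : ℝ → ℝ} (hf : DifferentiableAt ℝ f x) (hx : f x ≠ 0) :
    f x * deriv (fun t => Real.log (f t)) x = deriv f x := by
  rw [deriv.log hf hx, mul_div_cancel₀ _ hx]

theorem hasDerivAt_sum_mul_eq_sum_score_mul (Q : ι → ℝ)
    (hp : ∀ i, DifferentiableAt ℝ (p i) x) (hne : ∀ i, p i x ≠ 0) :
    HasDerivAt (fun t => ∑ i, p i t * Q i)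
      (∑ i, p i x * deriv (fun t => Real.log (p i t)) x * Q i) x := by
  simp only [mul_deriv_log_eq_deriv_s7 (hp _) (hne _)]
  exact HasDerivAt.fun_sum fun i _ => (hp i).hasDerivAt.mul_const (Q i)

theorem sum_score_eq_zero {c : ℝ} (hp : ∀ i, DifferentiableAt ℝ (p i) x)
    (hne : ∀ i, p i x ≠ 0) (hsum : ∀ t, ∑ i, p i t = c) :
    ∑ i, p i x * deriv (fun t => Real.log (p i t)) x = 0 := by
  simp only [mul_deriv_log_eq_deriv_s7 (hp _) (hne _)]
  exact sum_deriv_eq_zero_of_sum_eq_const hp hsum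

theorem sum_score_mul_sub_const {c : ℝ} (Q : ι → ℝ) (b : ℝ)
    (hp : ∀ i, DifferentiableAt ℝ (p i) x) (hne : ∀ i, p i x ≠ 0)
    (hsum : ∀ t, ∑ i, p i t = c) :
    ∑ i, p i x * deriv (fun t => Real.log (p i t)) x * (Q i - b) =
      ∑ i, p i x * deriv (fun t => Real.log (p i t)) x * Q i := by
  simp only [mul_sub, sum_sub_distrib, ← sum_mul, sum_score_eq_zero hp hne hsum, zero_mul,
    sub_zero]

end ScoreFunction

theorem policy_gradient_critic_baseline_general {A S : Type*} [Fintype A] [Fintype S]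
    (π : A → ℝ → ℝ)
    (hpos : ∀ a θ, 0 < π a θ)
    (hdiff : ∀ a, Differentiable ℝ (π a))
    (hsum : ∀ θ : ℝ, ∑ a, π a θ = 1)
    (P : S → A → ℝ)
    (ℓ₁ : A → ℝ) (ℓ₂ : S → ℝ) :
    ∀ (θ b : ℝ),
      HasDerivAt (fun θ => ∑ a, π a θ * (ℓ₁ a + ∑ s, P s a * ℓ₂ s))
        (∑ a, π a θ * deriv (fun t => Real.log (π a t)) θ *
          ((ℓ₁ a + ∑ s, P s a * ℓ₂ s) - b)) θ := by
  intro θ b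
  have hdiffAt : ∀ a, DifferentiableAt ℝ (π a) θ := fun a => (hdiff a).differentiableAt
  have hne : ∀ a, π a θ ≠ 0 := fun a => (hpos a θ).ne'
  rw [sum_score_mul_sub_const _ b hdiffAt hne hsum]
  exact hasDerivAt_sum_mul_eq_sum_score_mul _ hdiffAt hne

/-- The policy gradient theorem with critic and baseline in a one-step MDP:
with expected cost `J θ = ∑ a, π a θ * (ℓ₁ a + ∑ s, P s a * ℓ₂ s)` and critic
`Q a = ℓ₁ a + ∑ s, P s a * ℓ₂ s`, for every `θ` and baseline constant `b`, `J` is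
differentiable at `θ` with derivative `∑ a, π a θ * score a θ * (Q a − b)`. -/
theorem policy_gradient_critic_baseline {A S : Type*} [Fintype A] [Fintype S]
    (π : A → ℝ → ℝ)
    (hpos : ∀ a θ, 0 < π a θ)
    (hdiff : ∀ a, Differentiable ℝ (π a))
    (hsum : ∀ θ : ℝ, ∑ a, π a θ = 1)
    (P : S → A → ℝ)
    (hPnonneg : ∀ s a, 0 ≤ P s a)
    (hPsum : ∀ a, ∑ s, P s a = 1)
    (ℓ₁ : A → ℝ) (ℓ₂ : S → ℝ) :
    ∀ (θ b : ℝ),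
      HasDerivAt (fun θ => ∑ a, π a θ * (ℓ₁ a + ∑ s, P s a * ℓ₂ s))
        (∑ a, π a θ * deriv (fun t => Real.log (π a t)) θ *
          ((ℓ₁ a + ∑ s, P s a * ℓ₂ s) - b)) θ :=
  policy_gradient_critic_baseline_general π hpos hdiff hsum P ℓ₁ ℓ₂
end

section
/- Let (Ω, ℱ, ℙ) be a probability space, ℬ ≤ ℱ a sub-σ-algebra, and s, Q : Ω → ℝ random variables with s²·Q², s²·Q and s² integrable and with E[s²|ℬ] > 0 almost surely. Define the optimal baseline B* = E[s²·Q|ℬ] / E[s²|ℬ]. Then for every ℬ-measurable B : Ω → ℝ such that s²·(Q − B)² is integrable, E[s²·(Q − B*)²] ≤ E[s²·(Q − B)²]. -/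
/-!
Conditionally on `ℬ`, the loss `w (Q - B)²` (here `w = s²`) of a `ℬ`-measurable baseline `B`
is the quadratic `E[w Q²|ℬ] - 2 B E[w Q|ℬ] + B² E[w|ℬ]` in `B`, which is minimal at
`B* = E[w Q|ℬ] / E[w|ℬ]` wherever `E[w|ℬ] > 0`; taking expectations compares the losses.
The loss of `B*` is not known to be integrable, so one compares first the truncations equal to
`B*` on `{|B*| ≤ n}` and to `B` elsewhere, and passes to the limit with Fatou's lemma.
-/

open MeasureTheory Filter Topology

theorem integral_le_of_tendsto_of_integral_le {α : Type*} {m : MeasurableSpace α}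
    {μ : Measure α} {f : ℕ → α → ℝ} {g : α → ℝ} {C : ℝ}
    (hf_nonneg : ∀ n, 0 ≤ᵐ[μ] f n) (hf : ∀ n, Integrable (f n) μ)
    (hlim : ∀ᵐ a ∂μ, Tendsto (fun n => f n a) atTop (𝓝 (g a)))
    (hC : ∀ n, ∫ a, f n a ∂μ ≤ C) :
    ∫ a, g a ∂μ ≤ C := by
  have hg_nonneg : 0 ≤ᵐ[μ] g := by
    filter_upwards [hlim, ae_all_iff.2 hf_nonneg] with a ha hfa
    exact ge_of_tendsto' ha hfa
  have hg_meas := aestronglyMeasurable_of_tendsto_ae atTop (fun n => (hf n).1) hlim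
  rw [integral_eq_lintegral_of_nonneg_ae hg_nonneg hg_meas]
  refine ENNReal.toReal_le_of_le_ofReal
    ((integral_nonneg_of_ae (hf_nonneg 0)).trans (hC 0)) ?_
  calc ∫⁻ a, ENNReal.ofReal (g a) ∂μ
      = ∫⁻ a, liminf (fun n => ENNReal.ofReal (f n a)) atTop ∂μ :=
        lintegral_congr_ae <| hlim.mono fun a ha =>
          ((ENNReal.continuous_ofReal.tendsto _).comp ha).liminf_eq.symm
    _ ≤ liminf (fun n => ∫⁻ a, ENNReal.ofReal (f n a) ∂μ) atTop :=
        lintegral_liminf_le' fun n => (hf n).1.aemeasurable.ennreal_ofReal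
    _ ≤ ENNReal.ofReal C := liminf_le_of_frequently_le' <| Frequently.of_forall fun n => by
        rw [← ofReal_integral_eq_lintegral_ofReal (hf n) (hf_nonneg n)]
        exact ENNReal.ofReal_le_ofReal (hC n)

theorem integral_le_integral_of_condExp_le {α : Type*} {m m₀ : MeasurableSpace α}
    {μ : Measure α} (hm : m ≤ m₀) [SigmaFinite (μ.trim hm)] {f g : α → ℝ}
    (h : μ[f|m] ≤ᵐ[μ] μ[g|m]) : ∫ a, f a ∂μ ≤ ∫ a, g a ∂μ := by
  rw [← integral_condExp hm (f := f), ← integral_condExp hm (f := g)]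
  exact integral_mono_ae integrable_condExp integrable_condExp h

theorem sq_div_mul_sub_le {g h : ℝ} (hg : 0 < g) (b : ℝ) :
    (h / g) ^ 2 * g - 2 * (h / g * h) ≤ b ^ 2 * g - 2 * (b * h) := by
  have key : b ^ 2 * g - 2 * (b * h) - ((h / g) ^ 2 * g - 2 * (h / g * h))
      = (b * g - h) ^ 2 / g := by
    field_simp
    ring
  have : 0 ≤ (b * g - h) ^ 2 / g := by positivity
  linarith

section WeightedLeastSquares

variable {Ω : Type*} {mΩ : MeasurableSpace Ω} {μ : Measure Ω} {w Q B : Ω → ℝ}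

omit mΩ in
theorem mul_sub_sq_eq (w Q B : Ω → ℝ) :
    (fun ω => w ω * (Q ω - B ω) ^ 2)
      = (fun ω => w ω * Q ω ^ 2) - (2 : ℝ) • (fun ω => B ω * (w ω * Q ω))
        + fun ω => B ω ^ 2 * w ω := by
  funext ω
  simp only [Pi.add_apply, Pi.sub_apply, Pi.smul_apply, smul_eq_mul]
  ring

theorem aestronglyMeasurable_mul_sub_sq (hw : AEStronglyMeasurable w μ)
    (hwQ : AEStronglyMeasurable (fun ω => w ω * Q ω) μ)
    (hwQ2 : AEStronglyMeasurable (fun ω => w ω * Q ω ^ 2) μ) (hB : AEStronglyMeasurable B μ) :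
    AEStronglyMeasurable (fun ω => w ω * (Q ω - B ω) ^ 2) μ := by
  rw [mul_sub_sq_eq]
  exact (hwQ2.sub ((hB.mul hwQ).const_smul 2)).add ((hB.pow 2).mul hw)

theorem integrable_sq_mul_of_integrable_mul_sub_sq (hw_nonneg : ∀ᵐ ω ∂μ, 0 ≤ w ω)
    (hw : AEStronglyMeasurable w μ) (hB : AEStronglyMeasurable B μ)
    (hwQ2 : Integrable (fun ω => w ω * Q ω ^ 2) μ)
    (hloss : Integrable (fun ω => w ω * (Q ω - B ω) ^ 2) μ) :
    Integrable (fun ω => B ω ^ 2 * w ω) μ := by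
  refine ((hwQ2.const_mul 2).add (hloss.const_mul 2)).mono' ((hB.pow 2).mul hw) ?_
  filter_upwards [hw_nonneg] with ω hω
  rw [Real.norm_eq_abs, abs_of_nonneg (by positivity), Pi.add_apply]
  nlinarith [mul_nonneg hω (sq_nonneg (2 * Q ω - B ω))]

theorem integrable_mul_mul_of_integrable_sq_mul (hw_nonneg : ∀ᵐ ω ∂μ, 0 ≤ w ω)
    (hB : AEStronglyMeasurable B μ) (hwQ : Integrable (fun ω => w ω * Q ω) μ)
    (hwQ2 : Integrable (fun ω => w ω * Q ω ^ 2) μ)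
    (hwB2 : Integrable (fun ω => B ω ^ 2 * w ω) μ) :
    Integrable (fun ω => B ω * (w ω * Q ω)) μ := by
  refine (hwQ2.add hwB2).mono' (hB.mul hwQ.1) ?_
  filter_upwards [hw_nonneg] with ω hω
  rw [Real.norm_eq_abs, abs_le, Pi.add_apply]
  constructor
  · nlinarith [mul_nonneg hω (sq_nonneg (Q ω + B ω))]
  · nlinarith [mul_nonneg hω (sq_nonneg (Q ω - B ω))]

theorem integrable_mul_sub_sq_of_abs_le {C : ℝ} (hw_nonneg : ∀ᵐ ω ∂μ, 0 ≤ w ω)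
    (hw : Integrable w μ) (hwQ : Integrable (fun ω => w ω * Q ω) μ)
    (hwQ2 : Integrable (fun ω => w ω * Q ω ^ 2) μ)
    (hB : AEStronglyMeasurable B μ) (hBC : ∀ᵐ ω ∂μ, |B ω| ≤ C) :
    Integrable (fun ω => w ω * (Q ω - B ω) ^ 2) μ := by
  refine ((hwQ2.const_mul 2).add (hw.const_mul (2 * C ^ 2))).mono'
    (aestronglyMeasurable_mul_sub_sq hw.1 hwQ.1 hwQ2.1 hB) ?_
  filter_upwards [hw_nonneg, hBC] with ω hω hωC
  have hB2 : B ω ^ 2 ≤ C ^ 2 := sq_le_sq' (abs_le.1 hωC).1 (abs_le.1 hωC).2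
  rw [Real.norm_eq_abs, abs_of_nonneg (by positivity), Pi.add_apply]
  nlinarith [mul_nonneg hω (sq_nonneg (Q ω + B ω)), mul_le_mul_of_nonneg_left hB2 hω]

variable {ℬ : MeasurableSpace Ω}

theorem condExp_mul_sub_sq (hℬ : ℬ ≤ mΩ) (hw_nonneg : ∀ᵐ ω ∂μ, 0 ≤ w ω)
    (hw : Integrable w μ)
    (hwQ : Integrable (fun ω => w ω * Q ω) μ) (hwQ2 : Integrable (fun ω => w ω * Q ω ^ 2) μ)
    (hB : StronglyMeasurable[ℬ] B) (hloss : Integrable (fun ω => w ω * (Q ω - B ω) ^ 2) μ) :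
    μ[fun ω => w ω * (Q ω - B ω) ^ 2|ℬ] =ᵐ[μ] fun ω =>
      μ[fun ω => w ω * Q ω ^ 2|ℬ] ω - 2 * (B ω * μ[fun ω => w ω * Q ω|ℬ] ω)
        + B ω ^ 2 * μ[w|ℬ] ω := by
  have hBm : AEStronglyMeasurable[mΩ] B μ := (hB.mono hℬ).aestronglyMeasurable
  have hwB2 := integrable_sq_mul_of_integrable_mul_sub_sq hw_nonneg hw.1 hBm hwQ2 hloss
  have hwBQ := integrable_mul_mul_of_integrable_sq_mul hw_nonneg hBm hwQ hwQ2 hwB2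
  have h_wQ : μ[fun ω => B ω * (w ω * Q ω)|ℬ] =ᵐ[μ] B * μ[fun ω => w ω * Q ω|ℬ] :=
    condExp_mul_of_stronglyMeasurable_left hB hwBQ hwQ
  have h_w : μ[fun ω => B ω ^ 2 * w ω|ℬ] =ᵐ[μ] B ^ 2 * μ[w|ℬ] :=
    condExp_mul_of_stronglyMeasurable_left (hB.pow 2) hwB2 hw
  rw [mul_sub_sq_eq]
  filter_upwards [condExp_add (hwQ2.sub (hwBQ.smul (2 : ℝ))) hwB2 ℬ,
    condExp_sub hwQ2 (hwBQ.smul (2 : ℝ)) ℬ,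
    condExp_smul (2 : ℝ) (fun ω => B ω * (w ω * Q ω)) ℬ, h_wQ, h_w]
    with ω h_add h_sub h_smul h_wQ h_w
  simp only [Pi.add_apply, Pi.sub_apply, Pi.smul_apply, Pi.mul_apply, Pi.pow_apply,
    smul_eq_mul] at h_add h_sub h_smul h_wQ h_w
  rw [h_add, h_sub, h_smul, h_wQ, h_w]

variable {B' : Ω → ℝ} (hℬ : ℬ ≤ mΩ) [SigmaFinite (μ.trim hℬ)]
  (hw_nonneg : ∀ᵐ ω ∂μ, 0 ≤ w ω) (hw : Integrable w μ)
  (hwQ : Integrable (fun ω => w ω * Q ω) μ) (hwQ2 : Integrable (fun ω => w ω * Q ω ^ 2) μ)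
  (hB : StronglyMeasurable[ℬ] B) (hB' : StronglyMeasurable[ℬ] B')
  (hloss : Integrable (fun ω => w ω * (Q ω - B ω) ^ 2) μ)
  (hle : ∀ᵐ ω ∂μ, B' ω ^ 2 * μ[w|ℬ] ω - 2 * (B' ω * μ[fun ω => w ω * Q ω|ℬ] ω)
    ≤ B ω ^ 2 * μ[w|ℬ] ω - 2 * (B ω * μ[fun ω => w ω * Q ω|ℬ] ω))
include hℬ hw_nonneg hw hwQ hwQ2 hB hB' hloss hle

theorem integral_mul_sub_sq_le_of_integrable
    (hloss' : Integrable (fun ω => w ω * (Q ω - B' ω) ^ 2) μ) :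
    ∫ ω, w ω * (Q ω - B' ω) ^ 2 ∂μ ≤ ∫ ω, w ω * (Q ω - B ω) ^ 2 ∂μ := by
  refine integral_le_integral_of_condExp_le hℬ ?_
  filter_upwards [condExp_mul_sub_sq hℬ hw_nonneg hw hwQ hwQ2 hB' hloss',
    condExp_mul_sub_sq hℬ hw_nonneg hw hwQ hwQ2 hB hloss, hle] with ω h' h hω
  rw [h', h]
  linarith

theorem integral_mul_sub_sq_le :
    ∫ ω, w ω * (Q ω - B' ω) ^ 2 ∂μ ≤ ∫ ω, w ω * (Q ω - B ω) ^ 2 ∂μ := by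
  classical
  set A : ℕ → Set Ω := fun n => {ω | |B' ω| ≤ n}
  have hA : ∀ n, MeasurableSet[ℬ] (A n) := fun n =>
    measurableSet_le hB'.measurable.abs measurable_const
  set Bn : ℕ → Ω → ℝ := fun n => (A n).piecewise B' B
  have hloss_n : ∀ n, Integrable (fun ω => w ω * (Q ω - Bn n ω) ^ 2) μ := by
    intro n
    have : (fun ω => w ω * (Q ω - Bn n ω) ^ 2)
        = (A n).piecewise (fun ω => w ω * (Q ω - B' ω) ^ 2)
            (fun ω => w ω * (Q ω - B ω) ^ 2) := by
      funext ω
      by_cases h : ω ∈ A n <;> simp [Bn, h]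
    rw [this]
    refine Integrable.piecewise (hℬ _ (hA n)) ?_ hloss.integrableOn
    exact integrable_mul_sub_sq_of_abs_le (ae_restrict_of_ae hw_nonneg) hw.integrableOn
      hwQ.integrableOn hwQ2.integrableOn (hB'.mono hℬ).aestronglyMeasurable
      ((ae_restrict_mem (hℬ _ (hA n))).mono fun ω hω => hω)
  refine integral_le_of_tendsto_of_integral_le
    (fun n => hw_nonneg.mono fun ω hω => by positivity) hloss_n ?_ fun n =>
      integral_mul_sub_sq_le_of_integrable hℬ hw_nonneg hw hwQ hwQ2 hB
        (hB'.piecewise (hA n) hB) hloss ?_ (hloss_n n)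
  · refine ae_of_all _ fun ω => tendsto_const_nhds.congr' ?_
    filter_upwards [eventually_ge_atTop ⌈|B' ω|⌉₊] with n hn
    have : ω ∈ A n := show |B' ω| ≤ n from (Nat.le_ceil _).trans (by exact_mod_cast hn)
    simp [Bn, this]
  · filter_upwards [hle] with ω hω
    by_cases h : ω ∈ A n <;> simp [Bn, h, hω]

end WeightedLeastSquares

/-- The optimal baseline over a conditioning σ-algebra `ℬ`:
`B* = E[s²·Q|ℬ] / E[s²|ℬ]` minimizes `E[s²·(Q − B)²]` over all `ℬ`-measurable `B`. -/
theorem optimal_baseline {Ω : Type*} {mΩ : MeasurableSpace Ω}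
    (μ : Measure Ω) [IsProbabilityMeasure μ]
    (ℬ : MeasurableSpace Ω) (hℬ : ℬ ≤ mΩ)
    (s Q : Ω → ℝ)
    (h1 : Integrable (fun ω => s ω ^ 2 * Q ω ^ 2) μ)
    (h2 : Integrable (fun ω => s ω ^ 2 * Q ω) μ)
    (h3 : Integrable (fun ω => s ω ^ 2) μ)
    (hpos : ∀ᵐ ω ∂μ, 0 < (μ[fun ω => s ω ^ 2|ℬ]) ω) :
    ∀ B : Ω → ℝ, StronglyMeasurable[ℬ] B →
      Integrable (fun ω => s ω ^ 2 * (Q ω - B ω) ^ 2) μ →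
      ∫ ω, s ω ^ 2 *
          (Q ω - (μ[fun ω => s ω ^ 2 * Q ω|ℬ]) ω / (μ[fun ω => s ω ^ 2|ℬ]) ω) ^ 2 ∂μ
        ≤ ∫ ω, s ω ^ 2 * (Q ω - B ω) ^ 2 ∂μ := by
  intro B hB hloss
  refine integral_mul_sub_sq_le
    (B' := fun ω => (μ[fun ω => s ω ^ 2 * Q ω|ℬ]) ω / (μ[fun ω => s ω ^ 2|ℬ]) ω)
    hℬ (ae_of_all _ fun ω => sq_nonneg (s ω)) h3 h2 h1 hB
    (stronglyMeasurable_condExp.div stronglyMeasurable_condExp) hloss ?_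
  filter_upwards [hpos] with ω hω
  exact sq_div_mul_sub_le hω (B ω)
end

section
/- Let (Ω, ℱ, ℙ) be a probability space, ℬ₁ ≤ ℬ₂ ≤ ℱ sub-σ-algebras, and s, Q : Ω → ℝ with s²·Q², s²·Q and s² integrable and E[s²|ℬᵢ] > 0 almost surely for i = 1, 2. Let B*ᵢ = E[s²·Q|ℬᵢ] / E[s²|ℬᵢ] be the corresponding optimal baselines. Then E[s²·(Q − B*₂)²] ≤ E[s²·(Q − B*₁)²]; i.e., the optimal baseline over the larger conditioning set achieves variance no larger than the optimal baseline over the smaller set. -/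
/-!
Given `m`, the conditional loss of an `m`-measurable baseline `C` is the quadratic
`E[w Q²|m] - 2 C E[w Q|m] + C² E[w|m]` in `C` (with weight `w = s²`), which the ratio
`B = E[w Q|m] / E[w|m]` minimizes pointwise; where `E[w|m]` vanishes, the conditional
Cauchy–Schwarz inequality `E[w Q|m]² ≤ E[w|m] E[w Q²|m]` forces `E[w Q|m] = 0` as well.
Integrating, `B` beats every `m`-measurable baseline of finite weighted second moment.
The optimal baseline for `ℬ₁` is such a baseline for `ℬ₂`: its weighted second moment is
`E[w B²] = E[E[w|ℬ₁] B²] ≤ E[w Q²]`, again by Cauchy–Schwarz.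
-/

open MeasureTheory

section WeightedBaseline

variable {Ω : Type*} {m mΩ : MeasurableSpace Ω} {μ : Measure Ω} {w Q : Ω → ℝ}

lemma integrable_mul_mul_of_mul_sq {u v : Ω → ℝ} (hw : 0 ≤ᵐ[μ] w)
    (hu : Integrable (fun ω => w ω * u ω ^ 2) μ) (hv : Integrable (fun ω => w ω * v ω ^ 2) μ)
    (huv : AEStronglyMeasurable (fun ω => w ω * u ω * v ω) μ) :
    Integrable (fun ω => w ω * u ω * v ω) μ := by
  refine ((hu.add hv).div_const 2).mono' huv ?_
  filter_upwards [hw] with ω (hω : 0 ≤ w ω)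
  rw [Real.norm_eq_abs, mul_assoc, abs_mul, abs_of_nonneg hω, abs_mul, Pi.add_apply]
  nlinarith [mul_nonneg hω (sq_nonneg (|u ω| - |v ω|)), sq_abs (u ω), sq_abs (v ω)]

lemma lintegral_ofReal_mul_eq_condExp (hm : m ≤ mΩ) [SigmaFinite (μ.trim hm)]
    {X : Ω → ℝ} (hX : Integrable X μ) (hX0 : 0 ≤ᵐ[μ] X) {φ : Ω → ENNReal} (hφ : Measurable[m] φ) :
    ∫⁻ ω, ENNReal.ofReal (X ω) * φ ω ∂μ = ∫⁻ ω, ENNReal.ofReal (μ[X|m] ω) * φ ω ∂μ := by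
  -- the densities `X` and `μ[X|m]` have the same integral over every `m`-measurable set
  have htrim : (μ.withDensity fun ω => ENNReal.ofReal (X ω)).trim hm
      = (μ.withDensity fun ω => ENNReal.ofReal (μ[X|m] ω)).trim hm := by
    refine @Measure.ext _ m _ _ fun s hs => ?_
    rw [trim_measurableSet_eq hm hs, trim_measurableSet_eq hm hs,
      withDensity_apply _ (hm s hs), withDensity_apply _ (hm s hs),
      ← ofReal_integral_eq_lintegral_ofReal hX.integrableOn (ae_restrict_of_ae hX0),
      ← ofReal_integral_eq_lintegral_ofReal integrable_condExp.integrableOn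
        (ae_restrict_of_ae (condExp_nonneg hX0)), setIntegral_condExp hm hX hs]
  have hφ' := hφ.mono hm le_rfl
  calc ∫⁻ ω, ENNReal.ofReal (X ω) * φ ω ∂μ
      = ∫⁻ ω, φ ω ∂(μ.withDensity fun ω => ENNReal.ofReal (X ω)) :=
        (lintegral_withDensity_eq_lintegral_mul₀ hX.aemeasurable.ennreal_ofReal
          hφ'.aemeasurable).symm
    _ = ∫⁻ ω, φ ω ∂(μ.withDensity fun ω => ENNReal.ofReal (μ[X|m] ω)) := by
        rw [← lintegral_trim hm hφ, htrim, lintegral_trim hm hφ]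
    _ = ∫⁻ ω, ENNReal.ofReal (μ[X|m] ω) * φ ω ∂μ :=
        lintegral_withDensity_eq_lintegral_mul₀
          integrable_condExp.aemeasurable.ennreal_ofReal hφ'.aemeasurable

lemma condExp_mul_sub_sq_ae_eq {C : Ω → ℝ} (hC : StronglyMeasurable[m] C)
    (hQ2 : Integrable (fun ω => w ω * Q ω ^ 2) μ) (hQ : Integrable (fun ω => w ω * Q ω) μ)
    (hw : Integrable w μ) (hQC : Integrable (fun ω => w ω * Q ω * C ω) μ)
    (hC2 : Integrable (fun ω => w ω * C ω ^ 2) μ) :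
    μ[fun ω => w ω * (Q ω - C ω) ^ 2|m] =ᵐ[μ] fun ω =>
      μ[fun ω => w ω * Q ω ^ 2|m] ω - 2 * C ω * μ[fun ω => w ω * Q ω|m] ω
        + C ω ^ 2 * μ[w|m] ω := by
  have hCQ : Integrable (C * fun ω => w ω * Q ω) μ := hQC.congr (.of_forall fun ω => by
    simp only [Pi.mul_apply]; ring)
  have hCw : Integrable (C ^ 2 * w) μ := hC2.congr (.of_forall fun ω => by
    simp only [Pi.mul_apply, Pi.pow_apply]; ring)
  have hexpand : (fun ω => w ω * (Q ω - C ω) ^ 2)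
      = (fun ω => w ω * Q ω ^ 2) - (2 : ℝ) • (C * fun ω => w ω * Q ω) + C ^ 2 * w := by
    ext ω; simp only [Pi.add_apply, Pi.sub_apply, Pi.smul_apply, Pi.mul_apply, Pi.pow_apply,
      smul_eq_mul]; ring
  rw [hexpand]
  filter_upwards [condExp_add (hQ2.sub (hCQ.smul (2 : ℝ))) hCw m,
    condExp_sub hQ2 (hCQ.smul (2 : ℝ)) m, condExp_smul (μ := μ) (2 : ℝ) (C * fun ω => w ω * Q ω) m,
    condExp_mul_of_stronglyMeasurable_left hC hCQ hQ,
    condExp_mul_of_stronglyMeasurable_left (hC.pow 2) hCw hw] with ω h1 h2 h3 h4 h5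
  simp only [h1, Pi.add_apply, h2, Pi.sub_apply, h3, Pi.smul_apply, h4, Pi.mul_apply, h5,
    Pi.pow_apply, smul_eq_mul]
  ring

lemma sq_condExp_mul_le_mul_condExp (hw0 : 0 ≤ᵐ[μ] w)
    (hQ2 : Integrable (fun ω => w ω * Q ω ^ 2) μ) (hQ : Integrable (fun ω => w ω * Q ω) μ)
    (hw : Integrable w μ) :
    ∀ᵐ ω ∂μ, μ[fun ω => w ω * Q ω|m] ω ^ 2 ≤ μ[w|m] ω * μ[fun ω => w ω * Q ω ^ 2|m] ω := by
  -- rational coefficients keep the union of the exceptional null sets countable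
  have hrat : ∀ q : ℚ, ∀ᵐ ω ∂μ, 0 ≤ μ[w|m] ω * ((q : ℝ) * q)
      + (-2 * μ[fun ω => w ω * Q ω|m] ω) * q + μ[fun ω => w ω * Q ω ^ 2|m] ω := by
    intro q
    have hnonneg : 0 ≤ᵐ[μ] fun ω => w ω * (Q ω - q) ^ 2 := by
      filter_upwards [hw0] with ω (hω : 0 ≤ w ω)
      positivity
    filter_upwards [condExp_mul_sub_sq_ae_eq stronglyMeasurable_const hQ2 hQ hw
      (hQ.mul_const q) (hw.mul_const _), condExp_nonneg (m := m) hnonneg] with ω hexp (hpos : 0 ≤ _)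
    rw [hexp] at hpos
    linarith
  filter_upwards [ae_all_iff.2 hrat] with ω hω
  have hreal : ∀ x : ℝ, 0 ≤ μ[w|m] ω * (x * x)
      + (-2 * μ[fun ω => w ω * Q ω|m] ω) * x + μ[fun ω => w ω * Q ω ^ 2|m] ω :=
    fun x => Rat.denseRange_cast.induction_on x (isClosed_le continuous_const (by fun_prop)) hω
  have hdisc := discrim_le_zero hreal
  rw [discrim] at hdisc
  linarith

lemma sub_two_mul_div_mul_add_div_sq_mul_le {f g h : ℝ} (c : ℝ) (hf : 0 ≤ f)
    (hg : g ^ 2 ≤ f * h) :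
    h - 2 * (g / f) * g + (g / f) ^ 2 * f ≤ h - 2 * c * g + c ^ 2 * f := by
  rcases hf.eq_or_lt with rfl | hf
  · obtain rfl : g = 0 := pow_eq_zero_iff two_ne_zero |>.1 (le_antisymm (by simpa using hg)
      (sq_nonneg g))
    simp
  · have hdiff : h - 2 * c * g + c ^ 2 * f - (h - 2 * (g / f) * g + (g / f) ^ 2 * f)
        = (c * f - g) ^ 2 / f := by
      field_simp
      ring
    have : 0 ≤ (c * f - g) ^ 2 / f := by positivity
    linarith

variable (m μ w Q) in
noncomputable def optimalBaseline : Ω → ℝ := fun ω => μ[fun ω => w ω * Q ω|m] ω / μ[w|m] ω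

lemma stronglyMeasurable_optimalBaseline : StronglyMeasurable[m] (optimalBaseline m μ w Q) :=
  stronglyMeasurable_condExp.div stronglyMeasurable_condExp

lemma integrable_mul_optimalBaseline_sq (hm : m ≤ mΩ) [SigmaFinite (μ.trim hm)]
    (hw0 : 0 ≤ᵐ[μ] w) (hQ2 : Integrable (fun ω => w ω * Q ω ^ 2) μ)
    (hQ : Integrable (fun ω => w ω * Q ω) μ) (hw : Integrable w μ) :
    Integrable (fun ω => w ω * optimalBaseline m μ w Q ω ^ 2) μ := by
  set B := optimalBaseline m μ w Q
  have hB : StronglyMeasurable[m] B := stronglyMeasurable_optimalBaseline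
  have hQ2nonneg : 0 ≤ᵐ[μ] fun ω => w ω * Q ω ^ 2 := by
    filter_upwards [hw0] with ω (hω : 0 ≤ w ω)
    positivity
  have hbound : ∀ᵐ ω ∂μ, μ[w|m] ω * B ω ^ 2 ≤ μ[fun ω => w ω * Q ω ^ 2|m] ω := by
    filter_upwards [sq_condExp_mul_le_mul_condExp (m := m) hw0 hQ2 hQ hw,
      condExp_nonneg (m := m) hw0, condExp_nonneg (m := m) hQ2nonneg]
      with ω hcs (hf : 0 ≤ _) (hh : 0 ≤ _)
    rcases hf.eq_or_lt with hf | hf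
    · rw [← hf, zero_mul]; exact hh
    · simp only [B, optimalBaseline]
      rw [div_pow, mul_div_assoc', div_le_iff₀ (by positivity)]
      nlinarith
  refine ⟨hw.aestronglyMeasurable.mul ((hB.mono hm).aestronglyMeasurable.pow 2), ?_⟩
  calc ∫⁻ ω, ‖w ω * B ω ^ 2‖ₑ ∂μ
      = ∫⁻ ω, ENNReal.ofReal (w ω) * ENNReal.ofReal (B ω ^ 2) ∂μ := by
        refine lintegral_congr_ae ?_
        filter_upwards [hw0] with ω (hω : 0 ≤ w ω)
        rw [Real.enorm_eq_ofReal (by positivity), ENNReal.ofReal_mul hω]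
    _ = ∫⁻ ω, ENNReal.ofReal (μ[w|m] ω) * ENNReal.ofReal (B ω ^ 2) ∂μ :=
        lintegral_ofReal_mul_eq_condExp hm hw hw0 (hB.measurable.pow_const 2).ennreal_ofReal
    _ ≤ ∫⁻ ω, ‖μ[fun ω => w ω * Q ω ^ 2|m] ω‖ₑ ∂μ := by
        refine lintegral_mono_ae ?_
        filter_upwards [hbound, condExp_nonneg (m := m) hw0] with ω hω (hf : 0 ≤ _)
        rw [← ENNReal.ofReal_mul hf]
        exact (ENNReal.ofReal_le_ofReal hω).trans (Real.ofReal_le_enorm _)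
    _ < ⊤ := integrable_condExp.2

lemma integrable_mul_mul_optimalBaseline (hm : m ≤ mΩ) [SigmaFinite (μ.trim hm)]
    (hw0 : 0 ≤ᵐ[μ] w) (hQ2 : Integrable (fun ω => w ω * Q ω ^ 2) μ)
    (hQ : Integrable (fun ω => w ω * Q ω) μ) (hw : Integrable w μ) :
    Integrable (fun ω => w ω * Q ω * optimalBaseline m μ w Q ω) μ :=
  integrable_mul_mul_of_mul_sq hw0 hQ2 (integrable_mul_optimalBaseline_sq hm hw0 hQ2 hQ hw)
    (hQ.aestronglyMeasurable.mul
      (stronglyMeasurable_optimalBaseline.mono hm).aestronglyMeasurable)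

theorem integral_mul_sub_optimalBaseline_sq_le (hm : m ≤ mΩ) [SigmaFinite (μ.trim hm)]
    (hw0 : 0 ≤ᵐ[μ] w) (hQ2 : Integrable (fun ω => w ω * Q ω ^ 2) μ)
    (hQ : Integrable (fun ω => w ω * Q ω) μ) (hw : Integrable w μ) {C : Ω → ℝ}
    (hC : StronglyMeasurable[m] C) (hQC : Integrable (fun ω => w ω * Q ω * C ω) μ)
    (hC2 : Integrable (fun ω => w ω * C ω ^ 2) μ) :
    ∫ ω, w ω * (Q ω - optimalBaseline m μ w Q ω) ^ 2 ∂μ ≤ ∫ ω, w ω * (Q ω - C ω) ^ 2 ∂μ := by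
  have hB : StronglyMeasurable[m] (optimalBaseline m μ w Q) :=
    stronglyMeasurable_optimalBaseline
  have hB2 := integrable_mul_optimalBaseline_sq hm hw0 hQ2 hQ hw
  have hQB := integrable_mul_mul_optimalBaseline hm hw0 hQ2 hQ hw
  rw [← integral_condExp hm (f := fun ω => w ω * (Q ω - optimalBaseline m μ w Q ω) ^ 2),
    ← integral_condExp hm (f := fun ω => w ω * (Q ω - C ω) ^ 2)]
  refine integral_mono_ae integrable_condExp integrable_condExp ?_
  filter_upwards [condExp_mul_sub_sq_ae_eq hB hQ2 hQ hw hQB hB2,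
    condExp_mul_sub_sq_ae_eq hC hQ2 hQ hw hQC hC2,
    sq_condExp_mul_le_mul_condExp (m := m) hw0 hQ2 hQ hw, condExp_nonneg (m := m) hw0]
    with ω hlossB hlossC hcs (hf : 0 ≤ _)
  rw [hlossB, hlossC]
  exact sub_two_mul_div_mul_add_div_sq_mul_le _ hf hcs

end WeightedBaseline

theorem optimal_baseline_larger_set_general {Ω : Type*} {mΩ : MeasurableSpace Ω}
    (μ : Measure Ω) [IsProbabilityMeasure μ]
    (ℬ₁ ℬ₂ : MeasurableSpace Ω) (h12 : ℬ₁ ≤ ℬ₂) (h2 : ℬ₂ ≤ mΩ)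
    (s Q : Ω → ℝ)
    (hint1 : Integrable (fun ω => s ω ^ 2 * Q ω ^ 2) μ)
    (hint2 : Integrable (fun ω => s ω ^ 2 * Q ω) μ)
    (hint3 : Integrable (fun ω => s ω ^ 2) μ) :
    ∫ ω, s ω ^ 2 *
        (Q ω - (μ[fun ω => s ω ^ 2 * Q ω|ℬ₂]) ω / (μ[fun ω => s ω ^ 2|ℬ₂]) ω) ^ 2 ∂μ
      ≤ ∫ ω, s ω ^ 2 *
        (Q ω - (μ[fun ω => s ω ^ 2 * Q ω|ℬ₁]) ω / (μ[fun ω => s ω ^ 2|ℬ₁]) ω) ^ 2 ∂μ := by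
  have hw0 : 0 ≤ᵐ[μ] fun ω => s ω ^ 2 := ae_of_all _ fun ω => sq_nonneg (s ω)
  have h1 : ℬ₁ ≤ mΩ := h12.trans h2
  exact integral_mul_sub_optimalBaseline_sq_le h2 hw0 hint1 hint2 hint3
    (stronglyMeasurable_optimalBaseline.mono h12)
    (integrable_mul_mul_optimalBaseline h1 hw0 hint1 hint2 hint3)
    (integrable_mul_optimalBaseline_sq h1 hw0 hint1 hint2 hint3)

/-- The optimal baseline over a larger conditioning set achieves variance no larger
than the optimal baseline over a smaller set: with `B*ᵢ = E[s²·Q|ℬᵢ] / E[s²|ℬᵢ]` for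
`ℬ₁ ≤ ℬ₂`, we have `E[s²·(Q − B*₂)²] ≤ E[s²·(Q − B*₁)²]`. -/
theorem optimal_baseline_larger_set {Ω : Type*} {mΩ : MeasurableSpace Ω}
    (μ : Measure Ω) [IsProbabilityMeasure μ]
    (ℬ₁ ℬ₂ : MeasurableSpace Ω) (h12 : ℬ₁ ≤ ℬ₂) (h2 : ℬ₂ ≤ mΩ)
    (s Q : Ω → ℝ)
    (hint1 : Integrable (fun ω => s ω ^ 2 * Q ω ^ 2) μ)
    (hint2 : Integrable (fun ω => s ω ^ 2 * Q ω) μ)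
    (hint3 : Integrable (fun ω => s ω ^ 2) μ)
    (hpos1 : ∀ᵐ ω ∂μ, 0 < (μ[fun ω => s ω ^ 2|ℬ₁]) ω)
    (hpos2 : ∀ᵐ ω ∂μ, 0 < (μ[fun ω => s ω ^ 2|ℬ₂]) ω) :
    ∫ ω, s ω ^ 2 *
        (Q ω - (μ[fun ω => s ω ^ 2 * Q ω|ℬ₂]) ω / (μ[fun ω => s ω ^ 2|ℬ₂]) ω) ^ 2 ∂μ
      ≤ ∫ ω, s ω ^ 2 *
        (Q ω - (μ[fun ω => s ω ^ 2 * Q ω|ℬ₁]) ω / (μ[fun ω => s ω ^ 2|ℬ₁]) ω) ^ 2 ∂μ :=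
  optimal_baseline_larger_set_general μ ℬ₁ ℬ₂ h12 h2 s Q hint1 hint2 hint3
end

section
/- Let (Ω, ℱ, ℙ) be a probability space, ι a finite index type, m ≤ ℱ a sub-σ-algebra, and for each i ∈ ι let mᵢ ≤ ℱ be a sub-σ-algebra with m ≤ mᵢ and Xᵢ, Yᵢ : Ω → ℝ square-integrable random variables such that Xᵢ and Yᵢ are conditionally independent given mᵢ. Then, almost surely, E[∑_{i} Xᵢ · Yᵢ | m] = ∑_{i} E[ E[Xᵢ|mᵢ] · Yᵢ | m ]; i.e., the value-gradient with respect to the coarser set m can be bootstrapped from the gradient-critics E[Xᵢ|mᵢ] on the finer sets. -/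
/-!
Condition each summand on the finer σ-algebra `mᵢ` first (tower property). Conditional
independence factors `E[XᵢYᵢ|mᵢ] = E[Xᵢ|mᵢ] E[Yᵢ|mᵢ]`, and pulling out the `mᵢ`-measurable
factor turns the right side back into `E[E[Xᵢ|mᵢ] Yᵢ|mᵢ]`; conditioning down to `m` and summing
gives the claim. The factorisation holds because, under the regular conditional probability
`condExpKernel μ mᵢ ω`, `Xᵢ` and `Yᵢ` are independent for almost every `ω`.
-/

open MeasureTheory ProbabilityTheory

namespace ProbabilityTheory

section

variable {Ω β γ : Type*} {m mΩ : MeasurableSpace Ω} [StandardBorelSpace Ω]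
  {μ : Measure Ω} [IsFiniteMeasure μ] {f : Ω → β} {g : Ω → γ}

lemma ae_ae_condExpKernel_of_ae (hm : m ≤ mΩ) {p : Ω → Prop} (h : ∀ᵐ ω ∂μ, p ω) :
    ∀ᵐ ω ∂μ.trim hm, ∀ᵐ ω' ∂condExpKernel μ m ω, p ω' :=
  Measure.ae_ae_of_ae_comp (by rwa [condExpKernel_comp_trim])

variable [MeasurableSpace β] [MeasurableSpace γ]

lemma CondIndepFun.congr_ae {hm : m ≤ mΩ} {f' : Ω → β} {g' : Ω → γ}
    (h : CondIndepFun m hm f g μ) (hf : f =ᵐ[μ] f') (hg : g =ᵐ[μ] g') :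
    CondIndepFun m hm f' g' μ :=
  Kernel.IndepFun.congr' h (ae_ae_condExpKernel_of_ae hm hf) (ae_ae_condExpKernel_of_ae hm hg)

lemma CondIndepFun.ae_indepFun_condExpKernel
    [MeasurableSpace.CountableOrCountablyGenerated Ω (β × γ)] {hm : m ≤ mΩ}
    (h : CondIndepFun m hm f g μ) (hf : Measurable f) (hg : Measurable g) :
    ∀ᵐ ω ∂μ.trim hm, IndepFun f g (condExpKernel μ m ω) := by
  filter_upwards [(condIndepFun_iff_map_prod_eq_prod_map_map hf hg).1 h] with ω hω
  rw [indepFun_iff_map_prod_eq_prod_map_map hf.aemeasurable hg.aemeasurable,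
    ← Kernel.map_apply _ (hf.prodMk hg), hω, Kernel.prod_apply, Kernel.map_apply _ hf,
    Kernel.map_apply _ hg]

end

section

variable {Ω : Type*} {m m' mΩ : MeasurableSpace Ω} [StandardBorelSpace Ω]
  {μ : Measure Ω} [IsFiniteMeasure μ] {f g : Ω → ℝ}

lemma CondIndepFun.condExp_mul_of_measurable {hm : m ≤ mΩ} (h : CondIndepFun m hm f g μ)
    (hf_meas : Measurable f) (hg_meas : Measurable g) (hf : Integrable f μ) (hg : Integrable g μ)
    (hfg : Integrable (f * g) μ) :
    μ[f * g | m] =ᵐ[μ] μ[f | m] * μ[g | m] := by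
  filter_upwards [condExp_ae_eq_integral_condExpKernel hm hfg,
    condExp_ae_eq_integral_condExpKernel hm hf, condExp_ae_eq_integral_condExpKernel hm hg,
    ae_of_ae_trim hm (h.ae_indepFun_condExpKernel hf_meas hg_meas)] with ω hfg hf hg hindep
  rw [Pi.mul_apply, hfg, hf, hg]
  exact hindep.integral_fun_mul_eq_mul_integral hf_meas.aestronglyMeasurable
    hg_meas.aestronglyMeasurable

theorem CondIndepFun.condExp_mul {hm : m ≤ mΩ} (h : CondIndepFun m hm f g μ)
    (hf : Integrable f μ) (hg : Integrable g μ) (hfg : Integrable (f * g) μ) :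
    μ[f * g | m] =ᵐ[μ] μ[f | m] * μ[g | m] := by
  have hf' := hf.1.ae_eq_mk
  have hg' := hg.1.ae_eq_mk
  have hfg' := hf'.mul hg'
  have h_mk := (h.congr_ae hf' hg').condExp_mul_of_measurable
    hf.1.stronglyMeasurable_mk.measurable hg.1.stronglyMeasurable_mk.measurable
    (hf.congr hf') (hg.congr hg') (hfg.congr hfg')
  filter_upwards [h_mk, condExp_congr_ae (m := m) hfg', condExp_congr_ae (m := m) hf',
    condExp_congr_ae (m := m) hg'] with ω h_mk hfg hf hg
  simp only [Pi.mul_apply] at h_mk ⊢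
  rw [hfg, hf, hg, h_mk]

theorem CondIndepFun.condExp_mul_eq_condExp_condExp_mul (hmm' : m ≤ m') {hm' : m' ≤ mΩ}
    (h : CondIndepFun m' hm' f g μ) (hf : Integrable f μ) (hg : Integrable g μ)
    (hfg : Integrable (f * g) μ) (hfg_cond : Integrable (μ[f | m'] * g) μ) :
    μ[f * g | m] =ᵐ[μ] μ[μ[f | m'] * g | m] := by
  have h_pull : μ[μ[f | m'] * g | m'] =ᵐ[μ] μ[f | m'] * μ[g | m'] :=
    condExp_mul_of_stronglyMeasurable_left stronglyMeasurable_condExp hfg_cond hg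
  calc μ[f * g | m] =ᵐ[μ] μ[μ[f * g | m'] | m] := (condExp_condExp_of_le hmm' hm').symm
    _ =ᵐ[μ] μ[μ[μ[f | m'] * g | m'] | m] :=
      condExp_congr_ae ((h.condExp_mul hf hg hfg).trans h_pull.symm)
    _ =ᵐ[μ] μ[μ[f | m'] * g | m] := condExp_condExp_of_le hmm' hm'

end

end ProbabilityTheory

theorem gradient_critic_bootstrap_general {Ω : Type*} {mΩ : MeasurableSpace Ω} [StandardBorelSpace Ω]
    (μ : Measure Ω) [IsProbabilityMeasure μ]
    {ι : Type*} [Fintype ι]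
    (m : MeasurableSpace Ω)
    (mi : ι → MeasurableSpace Ω) (hmi : ∀ i, mi i ≤ mΩ) (hmle : ∀ i, m ≤ mi i)
    (X Y : ι → Ω → ℝ)
    (hX : ∀ i, MemLp (X i) 2 μ) (hY : ∀ i, MemLp (Y i) 2 μ)
    (hindep : ∀ i, CondIndepFun (mi i) (hmi i) (X i) (Y i) μ) :
    μ[fun ω => ∑ i, X i ω * Y i ω|m]
      =ᵐ[μ] fun ω => ∑ i, (μ[fun ω' => (μ[X i|mi i]) ω' * Y i ω'|m]) ω := by
  have hXY i : Integrable (X i * Y i) μ := (hX i).integrable_mul (hY i)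
  have h_term i : μ[X i * Y i | m] =ᵐ[μ] μ[μ[X i | mi i] * Y i | m] :=
    (hindep i).condExp_mul_eq_condExp_condExp_mul (hmle i) ((hX i).integrable one_le_two)
      ((hY i).integrable one_le_two) (hXY i) (((hX i).condExp one_le_two).integrable_mul (hY i))
  have h_sum : (fun ω => ∑ i, X i ω * Y i ω) = ∑ i, X i * Y i := by
    ext ω
    simp
  rw [h_sum]
  filter_upwards [condExp_finsetSum (fun i _ => hXY i) m, ae_all_iff.2 h_term] with ω hsum hterm
  rw [hsum, Finset.sum_apply]
  exact Finset.sum_congr rfl fun i _ => hterm i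

/-- The gradient-critic bootstrap: the value-gradient with respect to a coarser set `m`
can be bootstrapped from the gradient-critics `E[Xᵢ|mᵢ]` on finer sets `mᵢ ≥ m`:
almost surely, `E[∑ i, Xᵢ · Yᵢ | m] = ∑ i, E[E[Xᵢ|mᵢ] · Yᵢ | m]`. -/
theorem gradient_critic_bootstrap {Ω : Type*} {mΩ : MeasurableSpace Ω} [StandardBorelSpace Ω]
    (μ : Measure Ω) [IsProbabilityMeasure μ]
    {ι : Type*} [Fintype ι]
    (m : MeasurableSpace Ω) (hmΩ : m ≤ mΩ)
    (mi : ι → MeasurableSpace Ω) (hmi : ∀ i, mi i ≤ mΩ) (hmle : ∀ i, m ≤ mi i)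
    (X Y : ι → Ω → ℝ)
    (hX : ∀ i, MemLp (X i) 2 μ) (hY : ∀ i, MemLp (Y i) 2 μ)
    (hindep : ∀ i, CondIndepFun (mi i) (hmi i) (X i) (Y i) μ) :
    μ[fun ω => ∑ i, X i ω * Y i ω|m]
      =ᵐ[μ] fun ω => ∑ i, (μ[fun ω' => (μ[X i|mi i]) ω' * Y i ω'|m]) ω :=
  gradient_critic_bootstrap_general μ m mi hmi hmle X Y hX hY hindep
end
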